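/- arXiv:math/9912049 — 6 statements merged into one kernel-verified Lean document; each statement's English description precedes it below -/
import Mathlib

section
/- For every real number a ≥ 0, the hyperbolic area of the untruncated region R₂(a,∞) equals η(a) = a − 2·arctan(a/2); that is, ∫_{R₂(a,∞)} 1/z² dy dz = a − 2·arctan(a/2). (Lemma 3.1(2), case b = ∞.) -/
open MeasureTheory Real

/-- Lemma 3.1(2), case `b = ∞`: the hyperbolic area of
`R₂(a,∞) = {(y,z) : 1 ≤ z, y² + z² ≤ 1 + (a/2)²}` in the upper half-plane
equals `η(a) = a - 2 arctan (a/2)`. -/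
theorem area_R2_infty (a : ℝ) (ha : 0 ≤ a) :
    ∫ p in {p : ℝ × ℝ | 1 ≤ p.2 ∧ p.1 ^ 2 + p.2 ^ 2 ≤ 1 + (a / 2) ^ 2}, 1 / p.2 ^ 2 =
      a - 2 * Real.arctan (a / 2) := by
  obtain ⟨c, hc_def⟩ : ∃ c : ℝ, c = 1 + (a / 2) ^ 2 := ⟨_, rfl⟩
  rw [show {p : ℝ × ℝ | 1 ≤ p.2 ∧ p.1 ^ 2 + p.2 ^ 2 ≤ 1 + (a / 2) ^ 2}
      = {p : ℝ × ℝ | 1 ≤ p.2 ∧ p.1 ^ 2 + p.2 ^ 2 ≤ c} by rw [hc_def]]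
  set S : Set (ℝ × ℝ) := {p : ℝ × ℝ | 1 ≤ p.2 ∧ p.1 ^ 2 + p.2 ^ 2 ≤ c} with hS_def
  set f : ℝ × ℝ → ℝ := fun p => 1 / p.2 ^ 2 with hf_def
  have hc1 : (1:ℝ) ≤ c := by nlinarith [sq_nonneg (a/2)]
  have hc0 : (0:ℝ) < c := by linarith
  have hSclosed : IsClosed S := by
    have : S = {p : ℝ × ℝ | 1 ≤ p.2} ∩ {p : ℝ × ℝ | p.1 ^ 2 + p.2 ^ 2 ≤ c} := by
      ext p; simp [hS_def, and_comm]
    rw [this]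
    exact (isClosed_le continuous_const continuous_snd).inter
      (isClosed_le (by fun_prop) continuous_const)
  have hSmeas : MeasurableSet S := hSclosed.measurableSet
  have hsub : S ⊆ Set.Icc (-Real.sqrt c, 1) (Real.sqrt c, Real.sqrt c) := by
    rintro ⟨y, z⟩ ⟨h1, h2⟩
    simp only at h1 h2
    have hy2 : y ^ 2 ≤ c := by nlinarith
    have hz2 : z ^ 2 ≤ c := by nlinarith
    have hy' : |y| ≤ Real.sqrt c := by
      rw [← Real.sqrt_sq_eq_abs]; exact Real.sqrt_le_sqrt hy2
    have hz' : |z| ≤ Real.sqrt c := by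
      rw [← Real.sqrt_sq_eq_abs]; exact Real.sqrt_le_sqrt hz2
    rw [abs_le] at hy' hz'
    exact ⟨⟨hy'.1, h1⟩, ⟨hy'.2, hz'.2⟩⟩
  have hScompact : IsCompact S := IsCompact.of_isClosed_subset isCompact_Icc hSclosed hsub
  have hcont : ContinuousOn f S := by
    apply ContinuousOn.div continuousOn_const (by fun_prop)
    rintro ⟨y, z⟩ ⟨h1, _⟩
    simp only at h1
    positivity
  have hintOn : IntegrableOn f S := hcont.integrableOn_compact hScompact
  have hint : Integrable (S.indicator f) (volume : Measure (ℝ × ℝ)) :=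
    hintOn.integrable_indicator hSmeas
  rw [show (∫ p in S, f p) = ∫ p, S.indicator f p from (integral_indicator hSmeas).symm]
  rw [Measure.volume_eq_prod] at hint ⊢
  rw [integral_prod _ hint]
  -- inner integral
  have key : ∀ x : ℝ, (∫ z, S.indicator f (x, z)) =
      (Set.Icc (-(a/2)) (a/2)).indicator (fun y => 1 - 1 / Real.sqrt (c - y ^ 2)) x := by
    intro x
    by_cases hx : x ^ 2 ≤ (a/2) ^ 2
    · have hxIcc : x ∈ Set.Icc (-(a/2)) (a/2) := by
        have habs : |x| ≤ a / 2 := by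
          rw [← Real.sqrt_sq_eq_abs, ← Real.sqrt_sq (by positivity : (0:ℝ) ≤ a/2)]
          exact Real.sqrt_le_sqrt hx
        rw [abs_le] at habs
        exact ⟨habs.1, habs.2⟩
      have hcx1 : (1:ℝ) ≤ c - x ^ 2 := by nlinarith
      set s : ℝ := Real.sqrt (c - x ^ 2) with hs_def
      have hs1 : (1:ℝ) ≤ s := by
        rw [show (1:ℝ) = Real.sqrt 1 by simp]
        exact Real.sqrt_le_sqrt hcx1
      have hs_sq : s ^ 2 = c - x ^ 2 := Real.sq_sqrt (by linarith)
      have hset : (fun z => S.indicator f (x, z)) =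
          (Set.Icc 1 s).indicator (fun z => 1 / z ^ 2) := by
        funext z
        have hiff : (x, z) ∈ S ↔ z ∈ Set.Icc 1 s := by
          simp only [hS_def, Set.mem_setOf_eq, Set.mem_Icc]
          constructor
          · rintro ⟨h1, h2⟩
            refine ⟨h1, ?_⟩
            rw [hs_def, show z = Real.sqrt (z ^ 2) from (Real.sqrt_sq (by linarith)).symm]
            exact Real.sqrt_le_sqrt (by linarith)
          · rintro ⟨h1, h2⟩
            refine ⟨h1, ?_⟩
            nlinarith
        by_cases hz : (x, z) ∈ S
        · rw [Set.indicator_of_mem hz, Set.indicator_of_mem (hiff.mp hz)]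
        · rw [Set.indicator_of_notMem hz, Set.indicator_of_notMem (fun h => hz (hiff.mpr h))]
      rw [hset, integral_indicator measurableSet_Icc, integral_Icc_eq_integral_Ioc,
        ← intervalIntegral.integral_of_le hs1]
      have h1 : (∫ z in (1:ℝ)..s, 1 / z ^ 2) = ∫ z in (1:ℝ)..s, z ^ (-2 : ℤ) := by
        apply intervalIntegral.integral_congr
        intro z hz
        show 1 / z ^ 2 = z ^ (-2 : ℤ)
        rw [one_div, ← zpow_natCast z 2, ← zpow_neg]
        norm_num
      rw [h1, integral_zpow (Or.inr ⟨by norm_num, by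
        rw [Set.uIcc_of_le hs1]
        rintro ⟨h0, _⟩; linarith⟩)]
      rw [Set.indicator_of_mem hxIcc]
      have hs0 : (0:ℝ) < s := by linarith
      rw [show (-2 + 1 : ℤ) = -1 by norm_num, zpow_neg_one, zpow_neg_one, ← hs_def]
      push_cast
      rw [inv_one]
      field_simp
      ring
    · have h1 : ∀ z : ℝ, S.indicator f (x, z) = 0 := by
        intro z
        apply Set.indicator_of_notMem
        rintro ⟨hz1, hz2⟩
        simp only at hz1 hz2
        nlinarith [sq_nonneg (z - 1)]
      have h2 : x ∉ Set.Icc (-(a/2)) (a/2) := by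
        rintro ⟨hl, hr⟩
        apply hx
        nlinarith
      simp only [h1, integral_zero, Set.indicator_of_notMem h2]
  simp_rw [key]
  rw [integral_indicator measurableSet_Icc, integral_Icc_eq_integral_Ioc,
    ← intervalIntegral.integral_of_le (by linarith : -(a/2) ≤ a/2)]
  -- outer integral via FTC
  have hlt : a / 2 < Real.sqrt c := by
    rw [show a / 2 = Real.sqrt ((a/2)^2) from (Real.sqrt_sq (by positivity)).symm]
    apply Real.sqrt_lt_sqrt (by positivity)
    nlinarith
  have hr0 : (0:ℝ) < Real.sqrt c := by positivity
  have hr_sq : Real.sqrt c ^ 2 = c := Real.sq_sqrt hc0.le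
  have hderiv : ∀ y ∈ Set.uIcc (-(a/2)) (a/2),
      HasDerivAt (fun y => y - Real.arcsin (y / Real.sqrt c))
        (1 - 1 / Real.sqrt (c - y ^ 2)) y := by
    intro y hy
    rw [Set.uIcc_of_le (by linarith)] at hy
    have hy2 : y ^ 2 ≤ (a/2) ^ 2 := by
      rcases hy with ⟨h1, h2⟩; nlinarith
    have habs : |y / Real.sqrt c| < 1 := by
      rw [abs_div, abs_of_pos hr0, div_lt_one hr0]
      calc |y| = Real.sqrt (y ^ 2) := (Real.sqrt_sq_eq_abs y).symm
        _ ≤ Real.sqrt ((a/2)^2) := Real.sqrt_le_sqrt hy2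
        _ = a / 2 := Real.sqrt_sq (by positivity)
        _ < Real.sqrt c := hlt
    rw [abs_lt] at habs
    have harc : HasDerivAt (fun y : ℝ => Real.arcsin (y / Real.sqrt c))
        (1 / Real.sqrt (1 - (y / Real.sqrt c) ^ 2) * (1 / Real.sqrt c)) y := by
      exact (Real.hasDerivAt_arcsin (by linarith) (by linarith)).comp y
        ((hasDerivAt_id y).div_const (Real.sqrt c))
    have heq : 1 / Real.sqrt (1 - (y / Real.sqrt c) ^ 2) * (1 / Real.sqrt c)
        = 1 / Real.sqrt (c - y ^ 2) := by
      have h1 : 1 - (y / Real.sqrt c) ^ 2 = (c - y ^ 2) / c := by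
        field_simp
        linear_combination y ^ 2 * hr_sq
      have hcy : (1:ℝ) ≤ c - y ^ 2 := by nlinarith
      have hsy : Real.sqrt (c - y ^ 2) ≠ 0 := by positivity
      rw [h1, Real.sqrt_div (by linarith) c]
      field_simp
    have hd := (hasDerivAt_id y).sub harc
    rw [heq] at hd
    exact hd
  have hintg : IntervalIntegrable (fun y => 1 - 1 / Real.sqrt (c - y ^ 2)) volume
      (-(a/2)) (a/2) := by
    apply ContinuousOn.intervalIntegrable
    apply ContinuousOn.sub continuousOn_const
    apply ContinuousOn.div continuousOn_const
    · fun_prop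
    · intro y hy
      rw [Set.uIcc_of_le (by linarith)] at hy
      have h2 : y ^ 2 ≤ (a/2) ^ 2 := by rcases hy with ⟨h1, h2⟩; nlinarith
      have h3 : (1:ℝ) ≤ c - y ^ 2 := by nlinarith
      positivity
  rw [intervalIntegral.integral_eq_sub_of_hasDerivAt hderiv hintg]
  have harct : Real.arctan (a / 2) = Real.arcsin (a / 2 / Real.sqrt c) := by
    rw [Real.arctan_eq_arcsin, hc_def]
  rw [harct]
  rw [show -(a/2) / Real.sqrt c = -(a/2 / Real.sqrt c) by ring]
  rw [Real.arcsin_neg]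
  ring
end

section
/- For all real numbers a ≥ 0 and b ≥ 1 with b² ≥ 1 + a²/4, the hyperbolic area of the truncated region R₂(a,b) equals η(a) = a − 2·arctan(a/2); that is, ∫_{R₂(a,b)} 1/z² dy dz = a − 2·arctan(a/2). (Lemma 3.1(2), first case.) -/
set_option maxHeartbeats 1000000

open MeasureTheory Real Set

/-- Lemma 3.1(2), first case: if `b² ≥ 1 + a²/4` then the hyperbolic area of
`R₂(a,b) = {(y,z) : 1 ≤ z ≤ b, y² + z² ≤ 1 + (a/2)²}` equals
`η(a) = a - 2 arctan (a/2)`. -/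
theorem area_R2_large_b (a b : ℝ) (ha : 0 ≤ a) (hb : 1 ≤ b)
    (hab : 1 + a ^ 2 / 4 ≤ b ^ 2) :
    ∫ p in {p : ℝ × ℝ | 1 ≤ p.2 ∧ p.2 ≤ b ∧ p.1 ^ 2 + p.2 ^ 2 ≤ 1 + (a / 2) ^ 2},
        1 / p.2 ^ 2 =
      a - 2 * Real.arctan (a / 2) := by
  set c : ℝ := a / 2 with hc
  have hc0 : 0 ≤ c := by positivity
  set r2 : ℝ := 1 + c ^ 2 with hr2
  have hr2pos : 0 < r2 := by positivity
  have hr2b : r2 ≤ b ^ 2 := by rw [hr2, hc]; nlinarith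
  set g : ℝ → ℝ := fun y => Real.sqrt (r2 - y ^ 2) with hg
  have hgcont : Continuous g := Real.continuous_sqrt.comp (by continuity)
  -- the region equals the region below the graph of g, above z = 1
  have hset : {p : ℝ × ℝ | 1 ≤ p.2 ∧ p.2 ≤ b ∧ p.1 ^ 2 + p.2 ^ 2 ≤ r2}
      = {p : ℝ × ℝ | p.2 ∈ Icc 1 (g p.1)} := by
    ext ⟨y, z⟩
    simp only [Set.mem_setOf_eq, Set.mem_Icc, hg]
    constructor
    · rintro ⟨h1, _, h3⟩
      exact ⟨h1, (Real.le_sqrt' (by linarith)).mpr (by linarith)⟩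
    · rintro ⟨h1, h2⟩
      have hz2 : z ^ 2 ≤ r2 - y ^ 2 := (Real.le_sqrt' (by linarith)).mp h2
      refine ⟨h1, ?_, by linarith⟩
      calc z ≤ Real.sqrt (r2 - y ^ 2) := h2
        _ ≤ Real.sqrt (b ^ 2) := Real.sqrt_le_sqrt (by nlinarith)
        _ = b := Real.sqrt_sq (by linarith)
  set T : Set (ℝ × ℝ) := {p : ℝ × ℝ | p.2 ∈ Icc 1 (g p.1)} with hT
  have hTm : MeasurableSet T := by
    have h1 : MeasurableSet {p : ℝ × ℝ | 1 ≤ p.2} :=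
      measurableSet_le measurable_const measurable_snd
    have h2 : MeasurableSet {p : ℝ × ℝ | p.2 ≤ g p.1} :=
      measurableSet_le measurable_snd (hgcont.measurable.comp measurable_fst)
    have : T = {p : ℝ × ℝ | 1 ≤ p.2} ∩ {p : ℝ × ℝ | p.2 ≤ g p.1} := by
      ext p; simp [hT, Set.mem_Icc]
    rw [this]; exact h1.inter h2
  -- membership facts
  have hmemg : ∀ p : ℝ × ℝ, p ∈ T → 1 ≤ g p.1 ∧ p.1 ^ 2 ≤ c ^ 2 := by
    rintro ⟨y, z⟩ hp
    obtain ⟨h1, h2⟩ := hp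
    have h1g : 1 ≤ g y := le_trans h1 h2
    have h3 : (1 : ℝ) ^ 2 ≤ r2 - y ^ 2 := (Real.le_sqrt' one_pos).mp h1g
    exact ⟨h1g, by simp only [hr2] at h3 ⊢; nlinarith⟩
  have hTsub : T ⊆ Icc (-c) c ×ˢ Icc 1 (Real.sqrt r2) := by
    rintro ⟨y, z⟩ hp
    obtain ⟨h1g, hy2⟩ := hmemg _ hp
    obtain ⟨h1, h2⟩ := hp
    constructor
    · simp only [Set.mem_Icc]
      constructor
      · nlinarith [sq_nonneg (y + c)]
      · nlinarith [sq_nonneg (y - c)]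
    · refine ⟨h1, le_trans h2 ?_⟩
      exact Real.sqrt_le_sqrt (by nlinarith [sq_nonneg y])
  have hvolT : volume T ≠ ⊤ := by
    refine ne_top_of_le_ne_top ?_ (measure_mono hTsub)
    exact ((isCompact_Icc.prod isCompact_Icc).measure_lt_top).ne
  have hint : IntegrableOn (fun p : ℝ × ℝ => 1 / p.2 ^ 2) T := by
    refine Measure.integrableOn_of_bounded (M := 1) hvolT ?_ ?_
    · exact (measurable_const.div ((measurable_snd).pow_const 2)).aestronglyMeasurable
    · filter_upwards [ae_restrict_mem hTm] with p hp
      have h1 : 1 ≤ p.2 := hp.1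
      rw [Real.norm_eq_abs, abs_of_nonneg (by positivity)]
      rw [div_le_one (by positivity)]
      nlinarith
  rw [hset, ← integral_indicator hTm]
  have hprod : (volume : Measure (ℝ × ℝ)) = (volume : Measure ℝ).prod volume :=
    Measure.volume_eq_prod ℝ ℝ
  rw [hprod]
  have hintI : Integrable (T.indicator fun p : ℝ × ℝ => 1 / p.2 ^ 2)
      ((volume : Measure ℝ).prod volume) := by
    rw [← hprod]
    exact (integrable_indicator_iff hTm).mpr hint
  rw [MeasureTheory.integral_prod _ hintI]
  have hinner : ∀ y : ℝ,
      (∫ z, T.indicator (fun p : ℝ × ℝ => 1 / p.2 ^ 2) (y, z)) =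
        ∫ z in Icc 1 (g y), 1 / z ^ 2 := by
    intro y
    rw [← integral_indicator measurableSet_Icc]
    congr 1
  simp_rw [hinner]
  -- zero outside [-c, c]
  have hzero : ∀ y : ℝ, y ∉ Icc (-c) c → (∫ z in Icc 1 (g y), 1 / z ^ 2) = 0 := by
    intro y hy
    have hy2 : c ^ 2 < y ^ 2 := by
      simp only [Set.mem_Icc, not_and_or, not_le] at hy
      rcases hy with h | h <;> nlinarith
    have hgy : g y < 1 := by
      rw [hg]
      rw [Real.sqrt_lt' one_pos]
      simp only [hr2]; nlinarith
    rw [Set.Icc_eq_empty (not_le.mpr hgy), Measure.restrict_empty,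
      integral_zero_measure]
  rw [← setIntegral_eq_integral_of_forall_compl_eq_zero hzero]
  -- value inside [-c, c]
  have h1g : ∀ y ∈ Icc (-c) c, 1 ≤ g y := by
    intro y hy
    obtain ⟨h1, h2⟩ := hy
    rw [hg, Real.le_sqrt' one_pos]
    simp only [hr2]; nlinarith
  have hval : Set.EqOn (fun y => ∫ z in Icc 1 (g y), 1 / z ^ 2)
      (fun y => 1 - (g y)⁻¹) (Icc (-c) c) := by
    intro y hy
    have h1gy := h1g y hy
    simp only
    rw [MeasureTheory.integral_Icc_eq_integral_Ioc,
      ← intervalIntegral.integral_of_le h1gy]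
    have hzrw : ∀ z : ℝ, 1 / z ^ 2 = z ^ (-2 : ℤ) := by
      intro z
      rw [zpow_neg, one_div, zpow_two, sq]
    simp_rw [hzrw]
    rw [integral_zpow]
    · norm_num
      ring
    · refine Or.inr ⟨by norm_num, ?_⟩
      rw [Set.uIcc_of_le h1gy]
      simp only [Set.mem_Icc, not_and_or, not_le]
      left; norm_num
  rw [setIntegral_congr_fun measurableSet_Icc hval]
  rw [MeasureTheory.integral_Icc_eq_integral_Ioc,
    ← intervalIntegral.integral_of_le (by linarith : -c ≤ c)]
  have hgne : ∀ y ∈ Icc (-c) c, g y ≠ 0 := fun y hy => by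
    have := h1g y hy; linarith
  have hcontInv : ContinuousOn (fun y => (g y)⁻¹) (Icc (-c) c) :=
    ContinuousOn.inv₀ hgcont.continuousOn hgne
  have hInt2 : IntervalIntegrable (fun y => (g y)⁻¹) volume (-c) c := by
    apply ContinuousOn.intervalIntegrable
    rwa [Set.uIcc_of_le (by linarith : -c ≤ c)]
  rw [intervalIntegral.integral_sub intervalIntegrable_const hInt2,
    _root_.integral_one]
  have hsq : (0 : ℝ) < Real.sqrt r2 := Real.sqrt_pos.mpr hr2pos
  have hderiv : ∀ y ∈ Set.uIcc (-c) c,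
      HasDerivAt (fun y => Real.arcsin (y / Real.sqrt r2)) ((g y)⁻¹) y := by
    intro y hy
    rw [Set.uIcc_of_le (by linarith : -c ≤ c)] at hy
    obtain ⟨h1, h2⟩ := hy
    have hy2 : y ^ 2 < r2 := by simp only [hr2]; nlinarith
    have habs : |y / Real.sqrt r2| < 1 := by
      rw [abs_div, abs_of_pos hsq, div_lt_one hsq, ← Real.sqrt_sq_eq_abs]
      exact Real.sqrt_lt_sqrt (sq_nonneg y) hy2
    obtain ⟨hlt1, hlt2⟩ := abs_lt.mp habs
    have hd1 := Real.hasDerivAt_arcsin (ne_of_gt hlt1) (ne_of_lt hlt2)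
    have hd2 : HasDerivAt (fun y : ℝ => y / Real.sqrt r2) (1 / Real.sqrt r2) y := by
      simpa using (hasDerivAt_id y).div_const (Real.sqrt r2)
    have := hd1.comp y hd2
    refine this.congr_deriv (Eq.symm ?_)
    rw [div_pow, Real.sq_sqrt hr2pos.le]
    rw [one_div, one_div, ← mul_inv]
    rw [hg]
    have h0 : (0:ℝ) ≤ 1 - y ^ 2 / r2 := by
      rw [sub_nonneg, div_le_one hr2pos]; exact hy2.le
    rw [← Real.sqrt_mul h0]
    congr 1
    field_simp
  have harc : (∫ y in (-c)..c, (g y)⁻¹) = 2 * Real.arctan c := by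
    rw [intervalIntegral.integral_eq_sub_of_hasDerivAt hderiv hInt2]
    rw [neg_div, Real.arcsin_neg, Real.arctan_eq_arcsin]
    rw [hr2]
    ring
  rw [harc]
  rw [hc]
  ring
end

section
/- For all real numbers a ≥ 0 and b with 1 ≤ b and b² ≤ 1 + a²/4, the hyperbolic area of the truncated region R₂(a,b) equals η(a) − η(2·√(1 + a²/4 − b²)/b); that is, ∫_{R₂(a,b)} 1/z² dy dz = η(a) − η(2√(1 + a²/4 − b²)/b), where η(x) = x − 2·arctan(x/2). (Lemma 3.1(2), second case; the argument of the second η is 2√(1+a²/4−b²)/b, the Euclidean length of the chord in which the rescaled disk meets the line z = 1.) -/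
open MeasureTheory Real

/-- `η(x) = x - 2 arctan (x/2)`. -/
noncomputable def eta (x : ℝ) : ℝ := x - 2 * Real.arctan (x / 2)

open Set


noncomputable def F (R z : ℝ) : ℝ :=
  -2 * Real.sqrt (R - z ^ 2) / z + 2 * Real.arctan (Real.sqrt (R - z ^ 2) / z)

lemma F_deriv (R z : ℝ) (hz : 0 < z) (hzR : z ^ 2 < R) :
    HasDerivAt (F R) (2 * Real.sqrt (R - z ^ 2) / z ^ 2) z := by
  have hpos : 0 < R - z ^ 2 := by linarith
  set u := Real.sqrt (R - z ^ 2) with hu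
  have hu0 : 0 < u := Real.sqrt_pos.2 hpos
  have husq : u ^ 2 = R - z ^ 2 := Real.sq_sqrt hpos.le
  have hsq : HasDerivAt (fun z : ℝ => R - z ^ 2) (-(2 * z)) z := by
    simpa using ((hasDerivAt_pow 2 z).const_sub R)
  have hroot : HasDerivAt (fun z : ℝ => Real.sqrt (R - z ^ 2)) (-(2 * z) / (2 * u)) z := by
    exact (Real.hasDerivAt_sqrt hpos.ne').comp z hsq |>.congr_deriv (by ring)
  have h1 : HasDerivAt (fun z : ℝ => -2 * Real.sqrt (R - z ^ 2) / z)
      ((-2 * (-(2 * z) / (2 * u)) * z - -2 * u * 1) / z ^ 2) z := by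
    exact ((hroot.const_mul (-2)).div (hasDerivAt_id z) hz.ne')
  have h2 : HasDerivAt (fun z : ℝ => Real.sqrt (R - z ^ 2) / z)
      ((-(2 * z) / (2 * u) * z - u * 1) / z ^ 2) z := hroot.div (hasDerivAt_id z) hz.ne'
  have h3 : HasDerivAt (fun z : ℝ => 2 * Real.arctan (Real.sqrt (R - z ^ 2) / z))
      (2 * (1 / (1 + (Real.sqrt (R - z ^ 2) / z) ^ 2) * ((-(2 * z) / (2 * u) * z - u * 1) / z ^ 2))) z :=
    (h2.arctan).const_mul 2
  have := h1.add h3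
  refine this.congr_deriv ?_
  symm
  have hR' : R = u ^ 2 + z ^ 2 := by linarith [husq]
  rw [hR']
  have h5 : u ^ 2 + z ^ 2 - z ^ 2 = u ^ 2 := by ring
  rw [h5, Real.sqrt_sq hu0.le]
  have hden : 1 + (u / z) ^ 2 = (u ^ 2 + z ^ 2) / z ^ 2 := by field_simp; ring
  rw [hden]
  field_simp
  ring

lemma integral_1d (R b : ℝ) (hb : 1 ≤ b) (hbR : b ^ 2 ≤ R) :
    ∫ z in (1:ℝ)..b, 2 * Real.sqrt (R - z ^ 2) / z ^ 2 = F R b - F R 1 := by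
  have hz0 : ∀ z ∈ Icc (1:ℝ) b, z ≠ 0 := fun z hz => by
    have := hz.1; positivity
  have hc : ContinuousOn (fun z : ℝ => Real.sqrt (R - z ^ 2)) (Icc 1 b) :=
    Continuous.continuousOn (by continuity)
  have hcq : ContinuousOn (fun z : ℝ => Real.sqrt (R - z ^ 2) / z) (Icc 1 b) :=
    hc.div continuousOn_id hz0
  apply intervalIntegral.integral_eq_sub_of_hasDerivAt_of_le hb
  · exact ((continuousOn_const.mul hc).div continuousOn_id hz0).add
      (continuousOn_const.mul (Real.continuous_arctan.comp_continuousOn hcq))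
  · intro z hz
    exact F_deriv R z (by linarith [hz.1]) (by nlinarith [hz.1, hz.2])
  · apply ContinuousOn.intervalIntegrable
    rw [uIcc_of_le hb]
    exact (continuousOn_const.mul hc).div (continuousOn_pow 2) fun z hz => by
      have := hz.1; positivity

lemma F_eq_neg_eta (R b : ℝ) (hb : 0 < b) :
    F R b = -eta (2 * Real.sqrt (R - b ^ 2) / b) := by
  unfold F eta
  have h : 2 * Real.sqrt (R - b ^ 2) / b / 2 = Real.sqrt (R - b ^ 2) / b := by ring
  rw [h]
  ring

lemma inner_integral (R z : ℝ) (b : ℝ) (hz : z ∈ Icc (1:ℝ) b) (hbR : b ^ 2 ≤ R)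
    (s : Set (ℝ × ℝ))
    (hs : s = {p : ℝ × ℝ | 1 ≤ p.2 ∧ p.2 ≤ b ∧ p.1 ^ 2 + p.2 ^ 2 ≤ R}) :
    ∫ y, s.indicator (fun p => 1 / p.2 ^ 2) (y, z) =
      2 * Real.sqrt (R - z ^ 2) / z ^ 2 := by
  obtain ⟨hz1, hzb⟩ := hz
  have hz0 : 0 < z := by linarith
  have hzR : z ^ 2 ≤ R := by nlinarith
  set c := Real.sqrt (R - z ^ 2) with hc
  have hc0 : 0 ≤ c := Real.sqrt_nonneg _
  have hcsq : c ^ 2 = R - z ^ 2 := Real.sq_sqrt (by linarith)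
  have hiff : ∀ y : ℝ, ((y, z) ∈ s) ↔ y ∈ Icc (-c) c := by
    intro y
    rw [hs]
    simp only [mem_setOf_eq, mem_Icc]
    constructor
    · rintro ⟨-, -, h3⟩
      have h4 : y ^ 2 ≤ R - z ^ 2 := by linarith
      have := Real.sqrt_le_sqrt h4
      rw [Real.sqrt_sq_eq_abs] at this
      exact abs_le.mp this
    · rintro ⟨h1, h2⟩
      refine ⟨hz1, hzb, ?_⟩
      nlinarith [sq_le_sq' h1 h2]
  have heq : (fun y => s.indicator (fun p : ℝ × ℝ => 1 / p.2 ^ 2) (y, z)) =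
      (Icc (-c) c).indicator (fun _ => 1 / z ^ 2) := by
    funext y
    by_cases hy : y ∈ Icc (-c) c
    · rw [Set.indicator_of_mem ((hiff y).mpr hy), Set.indicator_of_mem hy]
    · rw [Set.indicator_of_notMem (fun h => hy ((hiff y).mp h)),
        Set.indicator_of_notMem hy]
  rw [heq, MeasureTheory.integral_indicator measurableSet_Icc,
    MeasureTheory.setIntegral_const, measureReal_def, Real.volume_Icc, smul_eq_mul,
    ENNReal.toReal_ofReal (by linarith)]
  field_simp
  ring

/-- Lemma 3.1(2), second case: if `1 ≤ b` and `b² ≤ 1 + a²/4` then the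
hyperbolic area of `R₂(a,b) = {(y,z) : 1 ≤ z ≤ b, y² + z² ≤ 1 + (a/2)²}`
equals `η(a) - η(2√(1 + a²/4 - b²)/b)`. -/
theorem area_R2_small_b (a b : ℝ) (ha : 0 ≤ a) (hb : 1 ≤ b)
    (hab : b ^ 2 ≤ 1 + a ^ 2 / 4) :
    ∫ p in {p : ℝ × ℝ | 1 ≤ p.2 ∧ p.2 ≤ b ∧ p.1 ^ 2 + p.2 ^ 2 ≤ 1 + (a / 2) ^ 2},
        1 / p.2 ^ 2 =
      eta a - eta (2 * Real.sqrt (1 + a ^ 2 / 4 - b ^ 2) / b) := by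
  set R := 1 + a ^ 2 / 4 with hR
  have hRa : 1 + (a / 2) ^ 2 = R := by rw [hR]; ring
  set s : Set (ℝ × ℝ) := {p | 1 ≤ p.2 ∧ p.2 ≤ b ∧ p.1 ^ 2 + p.2 ^ 2 ≤ 1 + (a / 2) ^ 2}
    with hsdef
  have hs' : s = {p : ℝ × ℝ | 1 ≤ p.2 ∧ p.2 ≤ b ∧ p.1 ^ 2 + p.2 ^ 2 ≤ R} := by
    rw [hsdef, hRa]
  have hs : MeasurableSet s := by
    rw [hs']
    have hm3 : MeasurableSet {p : ℝ × ℝ | p.1 ^ 2 + p.2 ^ 2 ≤ R} :=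
      measurableSet_le ((measurable_fst.pow_const 2).add (measurable_snd.pow_const 2))
        measurable_const
    exact (measurableSet_le measurable_const measurable_snd).inter
      ((measurableSet_le measurable_snd measurable_const).inter hm3)
  have hR1 : (1:ℝ) ≤ R := by nlinarith
  -- s is contained in a compact box
  have hsub : s ⊆ Icc (-(Real.sqrt R), 1) (Real.sqrt R, b) := by
    rintro ⟨y, z⟩ hp
    rw [hs'] at hp
    obtain ⟨h1, h2, h3⟩ := hp
    have hy2 : y ^ 2 ≤ R := by nlinarith
    have := Real.sqrt_le_sqrt hy2
    rw [Real.sqrt_sq_eq_abs] at this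
    have hy := abs_le.mp this
    exact ⟨⟨hy.1, h1⟩, ⟨hy.2, h2⟩⟩
  have hfin : volume s ≠ ⊤ :=
    ((measure_mono hsub).trans_lt isCompact_Icc.measure_lt_top).ne
  have hIntOn : IntegrableOn (fun p : ℝ × ℝ => 1 / p.2 ^ 2) s volume := by
    apply Measure.integrableOn_of_bounded hfin
      (Measurable.aestronglyMeasurable (by measurability))
    · filter_upwards [ae_restrict_mem hs] with p hp
      rw [hs'] at hp
      have h1 : (1:ℝ) ≤ p.2 := hp.1
      have h2 : (1:ℝ) ≤ p.2 ^ 2 := by nlinarith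
      rw [Real.norm_eq_abs, abs_of_nonneg (by positivity), div_le_one (by positivity)]
      exact h2
  have hint : Integrable (s.indicator fun p : ℝ × ℝ => 1 / p.2 ^ 2) (volume.prod volume) := by
    rw [← Measure.volume_eq_prod, integrable_indicator_iff hs]
    exact hIntOn
  rw [← MeasureTheory.integral_indicator hs, Measure.volume_eq_prod,
    MeasureTheory.integral_prod_symm _ hint]
  have hinner : (fun z => ∫ y, s.indicator (fun p : ℝ × ℝ => 1 / p.2 ^ 2) (y, z)) =
      (Icc (1:ℝ) b).indicator (fun z => 2 * Real.sqrt (R - z ^ 2) / z ^ 2) := by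
    funext z
    by_cases hz : z ∈ Icc (1:ℝ) b
    · rw [Set.indicator_of_mem hz]
      exact inner_integral R z b hz hab s hs'
    · rw [Set.indicator_of_notMem hz]
      have : ∀ y : ℝ, s.indicator (fun p : ℝ × ℝ => 1 / p.2 ^ 2) (y, z) = 0 := by
        intro y
        apply Set.indicator_of_notMem
        rw [hs']
        rintro ⟨h1, h2, -⟩
        exact hz ⟨h1, h2⟩
      simp only [this, integral_zero]
  calc (∫ z, ∫ y, s.indicator (fun p : ℝ × ℝ => 1 / p.2 ^ 2) (y, z))
      = ∫ z, (Icc (1:ℝ) b).indicator (fun z => 2 * Real.sqrt (R - z ^ 2) / z ^ 2) z := by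
        rw [← hinner]
    _ = ∫ z in Icc (1:ℝ) b, 2 * Real.sqrt (R - z ^ 2) / z ^ 2 :=
        MeasureTheory.integral_indicator measurableSet_Icc
    _ = ∫ z in (1:ℝ)..b, 2 * Real.sqrt (R - z ^ 2) / z ^ 2 := by
        rw [MeasureTheory.integral_Icc_eq_integral_Ioc, intervalIntegral.integral_of_le hb]
    _ = F R b - F R 1 := integral_1d R b hb hab
    _ = eta a - eta (2 * Real.sqrt (R - b ^ 2) / b) := by
        rw [F_eq_neg_eta R b (by linarith), F_eq_neg_eta R 1 one_pos]
        have h1 : R - 1 ^ 2 = (a / 2) ^ 2 := by rw [hR]; ring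
        rw [h1, Real.sqrt_sq (by linarith)]
        have h2 : 2 * (a / 2) / 1 = a := by ring
        rw [h2]
        ring
end

section
/- For all real numbers a and b with a ≥ 3π and b ≥ 5, the hyperbolic area of R₂(a,b) is strictly greater than 2π; that is, ∫_{R₂(a,b)} 1/z² dy dz > 2π. (Lemma 3.1(3).) -/
open MeasureTheory Real
open Set

lemma rect_integral (c z₀ z₁ : ℝ) (hc : 0 ≤ c) (hz₀ : 0 < z₀) (hz : z₀ ≤ z₁) :
    ∫ p in Icc (-c) c ×ˢ Ioc z₀ z₁, 1 / p.2 ^ 2 = (2 * c) * (1 / z₀ - 1 / z₁) := by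
  have h0 : (0:ℝ) < z₁ := lt_of_lt_of_le hz₀ hz
  have := MeasureTheory.setIntegral_prod_mul (μ := (volume : Measure ℝ))
      (ν := (volume : Measure ℝ)) (fun _ : ℝ => (1:ℝ)) (fun z : ℝ => 1 / z ^ 2)
      (Icc (-c) c) (Ioc z₀ z₁)
  rw [Measure.volume_eq_prod]
  simp only [one_mul] at this
  rw [this]
  have h1 : ∫ x in Icc (-c) c, (1:ℝ) = 2 * c := by
    rw [setIntegral_const, measureReal_def, Real.volume_Icc, smul_eq_mul, mul_one,
      ENNReal.toReal_ofReal (by linarith : (0:ℝ) ≤ c - -c)]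
    ring
  have h2 : ∫ z in Ioc z₀ z₁, 1 / z ^ 2 = 1 / z₀ - 1 / z₁ := by
    rw [← intervalIntegral.integral_of_le hz]
    have hcong : ∀ z ∈ Set.uIcc z₀ z₁, (1:ℝ) / z ^ 2 = z ^ (-2 : ℤ) := by
      intro z _
      rw [zpow_neg]
      norm_num
    rw [intervalIntegral.integral_congr hcong,
      integral_zpow (Or.inr ⟨by norm_num, by
        rw [Set.uIcc_of_le hz]
        intro h
        exact absurd h.1 (by linarith)⟩)]
    norm_num
    ring
  rw [h1, h2]

lemma integrableOn_f {s : Set (ℝ × ℝ)} (hs : MeasurableSet s) (hvol : volume s ≠ ⊤)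
    (hsub : ∀ p ∈ s, (1:ℝ) ≤ p.2) :
    IntegrableOn (fun p : ℝ × ℝ => 1 / p.2 ^ 2) s := by
  apply Measure.integrableOn_of_bounded hvol
  · exact (Measurable.aestronglyMeasurable (by fun_prop))
  · filter_upwards [ae_restrict_mem hs] with p hp
    have h1 := hsub p hp
    have h2 : (1:ℝ) ≤ p.2 ^ 2 := by nlinarith
    rw [Real.norm_eq_abs, abs_of_nonneg (by positivity)]
    rw [div_le_one (by positivity)]
    exact h2

lemma rect_integrable (c z₀ z₁ : ℝ) (h1 : 1 ≤ z₀) :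
    IntegrableOn (fun p : ℝ × ℝ => 1 / p.2 ^ 2) (Icc (-c) c ×ˢ Ioc z₀ z₁) := by
  apply integrableOn_f (measurableSet_Icc.prod measurableSet_Ioc)
  · rw [Measure.volume_eq_prod, Measure.prod_prod, Real.volume_Icc, Real.volume_Ioc]
    exact ENNReal.mul_ne_top ENNReal.ofReal_ne_top ENNReal.ofReal_ne_top
  · rintro ⟨y, z⟩ ⟨_, hz1, _⟩
    simp only
    linarith

lemma rect_disj (c z₀ z₁ c' z₀' z₁' : ℝ) (h : z₁ ≤ z₀') :
    Disjoint (Icc (-c) c ×ˢ Ioc z₀ z₁) (Icc (-c') c' ×ˢ Ioc z₀' z₁') := by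
  rw [Set.disjoint_left]
  rintro ⟨y, z⟩ ⟨_, _, hz2⟩ ⟨_, hz1', _⟩
  simp only at hz2 hz1'
  linarith

lemma rect_sub (c z₀ z₁ a b : ℝ) (h0 : 0 ≤ c) (h1 : 1 ≤ z₀) (h2 : z₁ ≤ b)
    (h3 : c ^ 2 + z₁ ^ 2 ≤ 1 + (a / 2) ^ 2) :
    Icc (-c) c ×ˢ Ioc z₀ z₁ ⊆
      {p : ℝ × ℝ | 1 ≤ p.2 ∧ p.2 ≤ b ∧ p.1 ^ 2 + p.2 ^ 2 ≤ 1 + (a / 2) ^ 2} := by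
  rintro ⟨y, z⟩ ⟨⟨hy1, hy2⟩, hz1, hz2⟩
  simp only [Set.mem_setOf_eq] at *
  refine ⟨by linarith, by linarith, ?_⟩
  have hy : y ^ 2 ≤ c ^ 2 := by nlinarith
  have hz : z ^ 2 ≤ z₁ ^ 2 := by nlinarith
  linarith

/-- Lemma 3.1(3): if `a ≥ 3π` and `b ≥ 5`, then the hyperbolic area of
`R₂(a,b) = {(y,z) : 1 ≤ z ≤ b, y² + z² ≤ 1 + (a/2)²}` is greater than `2π`. -/
theorem area_R2_gt_two_pi (a b : ℝ) (ha : 3 * Real.pi ≤ a) (hb : 5 ≤ b) :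
    2 * Real.pi <
      ∫ p in {p : ℝ × ℝ | 1 ≤ p.2 ∧ p.2 ≤ b ∧ p.1 ^ 2 + p.2 ^ 2 ≤ 1 + (a / 2) ^ 2},
        1 / p.2 ^ 2 := by
  have hπ : (3.141592 : ℝ) < Real.pi := Real.pi_gt_d6
  have hπ' : Real.pi < 3.15 := Real.pi_lt_d2
  have hA : (23.19 : ℝ) ≤ 1 + (a / 2) ^ 2 := by nlinarith
  set f : ℝ × ℝ → ℝ := fun p => 1 / p.2 ^ 2 with hf
  set T : Set (ℝ × ℝ) :=
    {p : ℝ × ℝ | 1 ≤ p.2 ∧ p.2 ≤ b ∧ p.1 ^ 2 + p.2 ^ 2 ≤ 1 + (a / 2) ^ 2} with hT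
  set R1 := Icc (-(93/20 : ℝ)) (93/20) ×ˢ Ioc (1 : ℝ) (5/4) with hR1
  set R2 := Icc (-(457/100 : ℝ)) (457/100) ×ˢ Ioc (5/4 : ℝ) (3/2) with hR2
  set R3 := Icc (-(219/50 : ℝ)) (219/50) ×ˢ Ioc (3/2 : ℝ) 2 with hR3
  set R4 := Icc (-(94/25 : ℝ)) (94/25) ×ˢ Ioc (2 : ℝ) 3 with hR4
  set R5 := Icc (-(67/25 : ℝ)) (67/25) ×ˢ Ioc (3 : ℝ) 4 with hR5
  set R6 := Icc (-(171/100 : ℝ)) (171/100) ×ˢ Ioc (4 : ℝ) (9/2) with hR6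
  -- subset
  have hsub : R1 ∪ (R2 ∪ (R3 ∪ (R4 ∪ (R5 ∪ R6)))) ⊆ T := by
    apply Set.union_subset (rect_sub _ _ _ _ _ (by norm_num) (by norm_num) (by linarith)
      (by nlinarith))
    apply Set.union_subset (rect_sub _ _ _ _ _ (by norm_num) (by norm_num) (by linarith)
      (by nlinarith))
    apply Set.union_subset (rect_sub _ _ _ _ _ (by norm_num) (by norm_num) (by linarith)
      (by nlinarith))
    apply Set.union_subset (rect_sub _ _ _ _ _ (by norm_num) (by norm_num) (by linarith)
      (by nlinarith))
    exact Set.union_subset (rect_sub _ _ _ _ _ (by norm_num) (by norm_num) (by linarith)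
      (by nlinarith))
      (rect_sub _ _ _ _ _ (by norm_num) (by norm_num) (by linarith) (by nlinarith))
  -- measurability of T
  have hTm : MeasurableSet T := by
    rw [hT]
    apply MeasurableSet.inter
    · exact measurableSet_le measurable_const measurable_snd
    apply MeasurableSet.inter
    · exact measurableSet_le measurable_snd measurable_const
    · exact measurableSet_le ((measurable_fst.pow_const 2).add (measurable_snd.pow_const 2)) measurable_const
  -- finite volume of T
  have hTvol : volume T ≠ ⊤ := by
    set K := Real.sqrt (1 + (a / 2) ^ 2) with hK
    have hTsub : T ⊆ Icc (-K) K ×ˢ Icc (1 : ℝ) b := by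
      rintro ⟨y, z⟩ ⟨h1, h2, h3⟩
      simp only at h1 h2 h3
      constructor
      · have hy2 : y ^ 2 ≤ 1 + (a / 2) ^ 2 := by nlinarith
        have : |y| ≤ K := by
          rw [hK, ← Real.sqrt_sq_eq_abs]
          exact Real.sqrt_le_sqrt hy2
        exact abs_le.mp this
      · exact ⟨h1, h2⟩
    refine ne_top_of_le_ne_top ?_ (measure_mono hTsub)
    rw [Measure.volume_eq_prod, Measure.prod_prod, Real.volume_Icc, Real.volume_Icc]
    exact ENNReal.mul_ne_top ENNReal.ofReal_ne_top ENNReal.ofReal_ne_top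
  have hTi : IntegrableOn f T := integrableOn_f hTm hTvol (fun p hp => hp.1)
  -- integrability on rectangles
  have hi1 := rect_integrable (93/20) 1 (5/4) le_rfl
  have hi2 := rect_integrable (457/100) (5/4) (3/2) (by norm_num)
  have hi3 := rect_integrable (219/50) (3/2) 2 (by norm_num)
  have hi4 := rect_integrable (94/25) 2 3 (by norm_num)
  have hi5 := rect_integrable (67/25) 3 4 (by norm_num)
  have hi6 := rect_integrable (171/100) 4 (9/2) (by norm_num)
  have hm : ∀ (c z₀ z₁ : ℝ), MeasurableSet (Icc (-c) c ×ˢ Ioc z₀ z₁) :=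
    fun _ _ _ => measurableSet_Icc.prod measurableSet_Ioc
  -- disjointness
  have hd56 : Disjoint R5 R6 := rect_disj _ _ _ _ _ _ le_rfl
  have hd45 : Disjoint R4 (R5 ∪ R6) := Set.disjoint_union_right.mpr
    ⟨rect_disj _ _ _ _ _ _ le_rfl, rect_disj _ _ _ _ _ _ (by norm_num)⟩
  have hd34 : Disjoint R3 (R4 ∪ (R5 ∪ R6)) := Set.disjoint_union_right.mpr
    ⟨rect_disj _ _ _ _ _ _ le_rfl, Set.disjoint_union_right.mpr
      ⟨rect_disj _ _ _ _ _ _ (by norm_num), rect_disj _ _ _ _ _ _ (by norm_num)⟩⟩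
  have hd23 : Disjoint R2 (R3 ∪ (R4 ∪ (R5 ∪ R6))) := Set.disjoint_union_right.mpr
    ⟨rect_disj _ _ _ _ _ _ le_rfl, Set.disjoint_union_right.mpr
      ⟨rect_disj _ _ _ _ _ _ (by norm_num), Set.disjoint_union_right.mpr
        ⟨rect_disj _ _ _ _ _ _ (by norm_num), rect_disj _ _ _ _ _ _ (by norm_num)⟩⟩⟩
  have hd12 : Disjoint R1 (R2 ∪ (R3 ∪ (R4 ∪ (R5 ∪ R6)))) := Set.disjoint_union_right.mpr
    ⟨rect_disj _ _ _ _ _ _ le_rfl, Set.disjoint_union_right.mpr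
      ⟨rect_disj _ _ _ _ _ _ (by norm_num), Set.disjoint_union_right.mpr
        ⟨rect_disj _ _ _ _ _ _ (by norm_num), Set.disjoint_union_right.mpr
          ⟨rect_disj _ _ _ _ _ _ (by norm_num), rect_disj _ _ _ _ _ _ (by norm_num)⟩⟩⟩⟩
  -- integral over the union
  have hval : ∫ p in R1 ∪ (R2 ∪ (R3 ∪ (R4 ∪ (R5 ∪ R6)))), f p = 57003 / 9000 := by
    rw [setIntegral_union hd12 (((hm _ _ _).union ((hm _ _ _).union ((hm _ _ _).union
        ((hm _ _ _).union (hm _ _ _)))))) hi1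
        ((hi2.union (hi3.union (hi4.union (hi5.union hi6)))))]
    rw [setIntegral_union hd23 (((hm _ _ _).union ((hm _ _ _).union
        ((hm _ _ _).union (hm _ _ _))))) hi2 ((hi3.union (hi4.union (hi5.union hi6))))]
    rw [setIntegral_union hd34 (((hm _ _ _).union ((hm _ _ _).union (hm _ _ _)))) hi3
        ((hi4.union (hi5.union hi6)))]
    rw [setIntegral_union hd45 (((hm _ _ _).union (hm _ _ _))) hi4 ((hi5.union hi6))]
    rw [setIntegral_union hd56 (hm _ _ _) hi5 hi6]
    rw [rect_integral _ _ _ (by norm_num) (by norm_num) (by norm_num),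
      rect_integral _ _ _ (by norm_num) (by norm_num) (by norm_num),
      rect_integral _ _ _ (by norm_num) (by norm_num) (by norm_num),
      rect_integral _ _ _ (by norm_num) (by norm_num) (by norm_num),
      rect_integral _ _ _ (by norm_num) (by norm_num) (by norm_num),
      rect_integral _ _ _ (by norm_num) (by norm_num) (by norm_num)]
    norm_num
  have hmono : ∫ p in R1 ∪ (R2 ∪ (R3 ∪ (R4 ∪ (R5 ∪ R6)))), f p ≤ ∫ p in T, f p := by
    apply setIntegral_mono_set hTi
    · filter_upwards with p
      positivity
    · exact HasSubset.Subset.eventuallyLE hsub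
  calc 2 * Real.pi < 57003 / 9000 := by nlinarith
    _ = ∫ p in R1 ∪ (R2 ∪ (R3 ∪ (R4 ∪ (R5 ∪ R6)))), f p := hval.symm
    _ ≤ _ := hmono
end

section
/- For all real numbers a > 0 and b ≥ 1, the hyperbolic area of R₂(a,b) is strictly less than a; that is, ∫_{R₂(a,b)} 1/z² dy dz < a. (The estimate area(R₂(t(α),b)) < t(α) used in the proof of Lemma 3.4(2).) -/
open MeasureTheory Real

/-- The estimate used in the proof of Lemma 3.4(2): for `a > 0` and `b ≥ 1`,
the hyperbolic area of `R₂(a,b) = {(y,z) : 1 ≤ z ≤ b, y² + z² ≤ 1 + (a/2)²}`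
is strictly less than `a`. -/
theorem area_R2_lt (a b : ℝ) (ha : 0 < a) (hb : 1 ≤ b) :
    (∫ p in {p : ℝ × ℝ | 1 ≤ p.2 ∧ p.2 ≤ b ∧ p.1 ^ 2 + p.2 ^ 2 ≤ 1 + (a / 2) ^ 2},
        1 / p.2 ^ 2) < a := by
  set c : ℝ := Real.sqrt (1 + (a / 2) ^ 2) with hc
  have hc1 : 1 ≤ c := by
    rw [hc]
    nlinarith [Real.sq_sqrt (show (0:ℝ) ≤ 1 + (a/2)^2 by positivity),
      Real.sqrt_nonneg (1 + (a/2)^2), sq_nonneg (a/2)]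
  have hc0 : 0 < c := lt_of_lt_of_le one_pos hc1
  set T : Set (ℝ × ℝ) := Set.Icc (-(a/2)) (a/2) ×ˢ Set.Icc 1 c with hT
  have hsub : {p : ℝ × ℝ | 1 ≤ p.2 ∧ p.2 ≤ b ∧ p.1 ^ 2 + p.2 ^ 2 ≤ 1 + (a / 2) ^ 2} ⊆ T := by
    rintro ⟨y, z⟩ ⟨h1, h2, h3⟩
    simp only [Set.mem_setOf_eq] at h1 h2 h3
    have hy2 : y ^ 2 ≤ (a / 2) ^ 2 := by nlinarith
    have hy : |y| ≤ a / 2 := by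
      rw [← Real.sqrt_sq_eq_abs]
      calc Real.sqrt (y ^ 2) ≤ Real.sqrt ((a/2)^2) := Real.sqrt_le_sqrt hy2
        _ = a / 2 := Real.sqrt_sq (by positivity)
    have hz : z ≤ c := by
      rw [hc]
      calc z = Real.sqrt (z ^ 2) := (Real.sqrt_sq (by linarith)).symm
        _ ≤ Real.sqrt (1 + (a/2)^2) := Real.sqrt_le_sqrt (by nlinarith)
    exact ⟨abs_le.mp hy, h1, hz⟩
  have hTcompact : IsCompact T := (isCompact_Icc).prod isCompact_Icc
  have hfcont : ContinuousOn (fun p : ℝ × ℝ => 1 / p.2 ^ 2) T := by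
    apply ContinuousOn.div continuousOn_const
    · exact (continuous_snd.pow 2).continuousOn
    · rintro ⟨y, z⟩ ⟨_, hz, _⟩
      have : (0:ℝ) < z := lt_of_lt_of_le one_pos hz
      positivity
  have hint : IntegrableOn (fun p : ℝ × ℝ => 1 / p.2 ^ 2) T := by
    exact hfcont.integrableOn_compact hTcompact
  have hnonneg : ∀ p : ℝ × ℝ, 0 ≤ 1 / p.2 ^ 2 := fun p => by positivity
  have hmono : (∫ p in {p : ℝ × ℝ | 1 ≤ p.2 ∧ p.2 ≤ b ∧ p.1 ^ 2 + p.2 ^ 2 ≤ 1 + (a / 2) ^ 2},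
        1 / p.2 ^ 2) ≤ ∫ p in T, 1 / p.2 ^ 2 := by
    apply setIntegral_mono_set hint
    · exact Filter.Eventually.of_forall hnonneg
    · exact HasSubset.Subset.eventuallyLE hsub
  have hTval : (∫ p in T, 1 / p.2 ^ 2) = a * (1 - 1/c) := by
    rw [hT]
    have := MeasureTheory.setIntegral_prod_mul (μ := (volume : Measure ℝ))
      (ν := (volume : Measure ℝ)) (s := Set.Icc (-(a/2)) (a/2)) (t := Set.Icc 1 c)
      (f := fun _ : ℝ => (1:ℝ)) (g := fun z : ℝ => 1 / z ^ 2)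
    rw [Measure.volume_eq_prod]
    simp only [one_mul] at this
    rw [this]
    have h1 : (∫ _ in Set.Icc (-(a/2)) (a/2), (1:ℝ)) = a := by
      simp only [MeasureTheory.setIntegral_const, smul_eq_mul, mul_one, Real.volume_Icc]
      rw [Measure.real, Real.volume_Icc, ENNReal.toReal_ofReal (by linarith)]
      ring
    have h2 : (∫ z in Set.Icc (1:ℝ) c, 1 / z ^ 2) = 1 - 1/c := by
      have hu : (0:ℝ) ∉ Set.uIcc (1:ℝ) c := by
        rw [Set.uIcc_of_le hc1]
        rintro ⟨h0, _⟩; linarith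
      have key := integral_zpow (a := (1:ℝ)) (b := c) (n := -2) (Or.inr ⟨by norm_num, hu⟩)
      have hcong : ∀ z ∈ Set.uIcc (1:ℝ) c, 1 / z ^ 2 = z ^ (-2 : ℤ) := by
        intro z hz
        simp [one_div]
      rw [MeasureTheory.integral_Icc_eq_integral_Ioc,
        ← intervalIntegral.integral_of_le hc1,
        intervalIntegral.integral_congr hcong, key]
      norm_num
      ring
    rw [h1, h2]
  have hlt : a * (1 - 1/c) < a := by
    have : 0 < 1/c := by positivity
    nlinarith
  calc (∫ p in {p : ℝ × ℝ | 1 ≤ p.2 ∧ p.2 ≤ b ∧ p.1 ^ 2 + p.2 ^ 2 ≤ 1 + (a / 2) ^ 2},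
        1 / p.2 ^ 2) ≤ ∫ p in T, 1 / p.2 ^ 2 := hmono
    _ = a * (1 - 1/c) := hTval
    _ < a := hlt
end

section
/- For all real numbers b, r with 0 < b ≤ r, the interval integral ∫_b^r √(r² − z²)/z² dz equals √(r² − b²)/b − arctan(√(r² − b²)/b). (The key antiderivative computation in the proof of Lemma 3.1(2): with b = 1 and r = √(1+(a/2)²) it gives ∫_1^r √(r²−z²)/z² dz = a/2 − arctan(a/2).) -/
open MeasureTheory Real intervalIntegral

/-- The key antiderivative computation in the proof of Lemma 3.1(2):
for `0 < b ≤ r`, `∫_b^r √(r² - z²)/z² dz = √(r² - b²)/b - arctan(√(r² - b²)/b)`. -/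
theorem integral_sqrt_sub_sq_div_sq (b r : ℝ) (hb : 0 < b) (hbr : b ≤ r) :
    ∫ z in b..r, Real.sqrt (r ^ 2 - z ^ 2) / z ^ 2 =
      Real.sqrt (r ^ 2 - b ^ 2) / b - Real.arctan (Real.sqrt (r ^ 2 - b ^ 2) / b) := by
  rcases eq_or_lt_of_le hbr with rfl | hlt
  · simp
  have hr : 0 < r := hb.trans hlt
  set F : ℝ → ℝ := fun z => -Real.sqrt (r ^ 2 - z ^ 2) / z - Real.arcsin (z / r) with hF
  have hcont : ContinuousOn F (Set.Icc b r) := by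
    apply ContinuousOn.sub
    · exact ContinuousOn.div
        (Continuous.continuousOn (by continuity))
        continuousOn_id
        (fun z hz => (hb.trans_le hz.1).ne')
    · exact (Real.continuous_arcsin.comp (continuous_id.div_const r)).continuousOn
  have hderiv : ∀ z ∈ Set.Ioo b r, HasDerivAt F (Real.sqrt (r ^ 2 - z ^ 2) / z ^ 2) z := by
    intro z hz
    have hz0 : 0 < z := hb.trans hz.1
    have hzr : z < r := hz.2
    have hpos : 0 < r ^ 2 - z ^ 2 := by nlinarith
    set s := Real.sqrt (r ^ 2 - z ^ 2) with hs
    have hs0 : 0 < s := Real.sqrt_pos.mpr hpos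
    have hs2 : s ^ 2 = r ^ 2 - z ^ 2 := Real.sq_sqrt hpos.le
    have h1 : HasDerivAt (fun x : ℝ => r ^ 2 - x ^ 2) (-(2 * z)) z := by
      simpa using (hasDerivAt_pow 2 z).const_sub (r ^ 2)
    have h2 : HasDerivAt (fun x : ℝ => Real.sqrt (r ^ 2 - x ^ 2))
        (1 / (2 * s) * (-(2 * z))) z :=
      (Real.hasDerivAt_sqrt hpos.ne').comp z h1
    have h3 : HasDerivAt (fun x : ℝ => -Real.sqrt (r ^ 2 - x ^ 2) / x)
        ((-(1 / (2 * s) * (-(2 * z))) * z - -s * 1) / z ^ 2) z :=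
      h2.neg.div (hasDerivAt_id z) hz0.ne'
    have hd1 : z / r ≠ -1 := by
      have : (0:ℝ) < z / r := div_pos hz0 hr
      linarith
    have hd2 : z / r ≠ 1 := by
      have : z / r < 1 := (div_lt_one hr).mpr hzr
      linarith
    have h4 : HasDerivAt (fun x : ℝ => Real.arcsin (x / r))
        (1 / Real.sqrt (1 - (z / r) ^ 2) * (1 / r)) z := by
      have := (Real.hasDerivAt_arcsin hd1 hd2).comp z ((hasDerivAt_id z).div_const r)
      simpa [Function.comp_def] using this
    have hsqr : Real.sqrt (1 - (z / r) ^ 2) = s / r := by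
      rw [show (1 : ℝ) - (z / r) ^ 2 = (r ^ 2 - z ^ 2) / r ^ 2 by field_simp]
      rw [Real.sqrt_div hpos.le, Real.sqrt_sq hr.le]
    have := h3.sub h4
    refine this.congr_deriv ?_
    rw [hsqr]
    field_simp
    nlinarith [hs2, sq_nonneg z, hs0]
  have hint : IntervalIntegrable (fun z => Real.sqrt (r ^ 2 - z ^ 2) / z ^ 2) volume b r := by
    apply ContinuousOn.intervalIntegrable
    apply ContinuousOn.div (Continuous.continuousOn (by continuity)) (by fun_prop)
    intro z hz
    rw [Set.uIcc_of_le hbr] at hz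
    exact pow_ne_zero 2 (hb.trans_le hz.1).ne'
  have key := intervalIntegral.integral_eq_sub_of_hasDerivAt_of_le hbr hcont hderiv hint
  rw [key, hF]
  have hrr : Real.sqrt (r ^ 2 - r ^ 2) = 0 := by simp
  have harcsin1 : Real.arcsin (r / r) = π / 2 := by
    rw [div_self hr.ne', Real.arcsin_one]
  have hbr1 : b / r < 1 := (div_lt_one hr).mpr hlt
  have hbrpos : 0 < b / r := div_pos hb hr
  -- identity: π/2 - arcsin(b/r) = arctan(√(r²-b²)/b)
  have hid : Real.arctan (Real.sqrt (r ^ 2 - b ^ 2) / b) = π / 2 - Real.arcsin (b / r) := by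
    rw [← Real.arccos, Real.arccos_eq_arctan hbrpos]
    congr 1
    rw [show (1 : ℝ) - (b / r) ^ 2 = (r ^ 2 - b ^ 2) / r ^ 2 by field_simp]
    rw [Real.sqrt_div (by nlinarith) (r ^ 2), Real.sqrt_sq hr.le]
    field_simp
  rw [hid]
  simp only
  rw [hrr, harcsin1]
  ring
end
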